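/- Let 𝒜 be an L-structure, ℬ an L'-structure, and (g, f) a semi-retraction between 𝒜 and ℬ. Call an injection ψ : X → Y between finite subsets of a structure qftp-preserving if every finite tuple from X has the same quantifier-free type as its image tuple under ψ. For an injection h on a structure and a function ψ : X → Y between subsets of its domain, h(ψ) denotes the function from h(X) to h(Y) sending h(x) to h(ψ(x)). Then for all finite tuples ā, b̄ from 𝒜 and c̄ from ℬ, for every qftp-preserving injection v from the range of ā to the range of b̄, and for every qftp-preserving injection ψ from the range of g(b̄) to the range of c̄: (i) the map g(v) from g(range ā) to g(range b̄) is a qftp-preserving injection; (ii) the maps Φ_{b̄,c̄}(ψ) : range b̄ → range f(c̄) defined by b ↦ f(ψ(g(b))), and Φ_{ā,c̄}(ψ ∘ g(v)) : range ā → range f(c̄) defined by a ↦ f(ψ(g(v(a)))), are qftp-preserving injections; and (iii) Φ_{ā,c̄}(ψ ∘ g(v)) = Φ_{b̄,c̄}(ψ) ∘ v. (Hence (F, G) with F(ā) = g(ā), G(c̄) = f(c̄) and Φ is a pre-adjunction between the categories of finite tuples of 𝒜 and of ℬ with qftp-preserving injections as morphisms.) -/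

import Mathlib

open FirstOrder FirstOrder.Language

/-- Two same-length tuples have the same quantifier-free type over ∅. -/
def SameQfType (L : FirstOrder.Language) (M : Type*) [L.Structure M] {n : ℕ}
    (x y : Fin n → M) : Prop :=
  ∀ φ : L.Formula (Fin n), φ.IsQF → (φ.Realize x ↔ φ.Realize y)

/-- A qftp-respecting injection between structures in possibly different languages. -/
def QftpRespecting (L L' : FirstOrder.Language) (M N : Type*) [L.Structure M] [L'.Structure N]
    (h : M → N) : Prop :=
  Function.Injective h ∧
    ∀ (n : ℕ) (x y : Fin n → M), SameQfType L M x y → SameQfType L' N (h ∘ x) (h ∘ y)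

/-- `(g, f)` is a semi-retraction between `M` and `N`: both maps are qftp-respecting
injections and `f ∘ g` is qftp-preserving (equivalently, an `L`-embedding of `M` into `M`). -/
def IsSemiRetraction (L L' : FirstOrder.Language) (M N : Type*)
    [L.Structure M] [L'.Structure N] (g : M → N) (f : N → M) : Prop :=
  QftpRespecting L L' M N g ∧ QftpRespecting L' L N M f ∧
    ∀ (n : ℕ) (x : Fin n → M), SameQfType L M x (f ∘ g ∘ x)

/-- `M` is locally finite: every finitely generated substructure is finite. -/
def StructLocallyFinite (L : FirstOrder.Language) (M : Type*) [L.Structure M] : Prop :=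
  ∀ S : L.Substructure M, S.FG → (S : Set M).Finite

/-- `M → (B)^A_{r,d}` for substructures. -/
def ArrowSub (L : FirstOrder.Language) (M : Type*) [L.Structure M]
    (A B : L.Substructure M) (r d : ℕ) : Prop :=
  ∀ c : L.Substructure M → Fin r, ∃ B' : L.Substructure M,
    Nonempty (B' ≃[L] B) ∧
      (c '' {A' : L.Substructure M | A' ≤ B' ∧ Nonempty (A' ≃[L] A)}).ncard ≤ d

/-- `M →ᵉ (B)^A_{r,d}` for embeddings. -/
def ArrowEmb (L : FirstOrder.Language) (M : Type*) [L.Structure M]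
    (A B : L.Substructure M) (r d : ℕ) : Prop :=
  ∀ c : (A ↪[L] M) → Fin r, ∃ h : B ↪[L] M,
    (c '' {j : A ↪[L] M | ∃ e : A ↪[L] B, j = h.comp e}).ncard ≤ d

/-- A structure is rigid if its only automorphism is the identity. -/
def IsRigidStructure (L : FirstOrder.Language) (M : Type*) [L.Structure M] : Prop :=
  ∀ σ : M ≃[L] M, ∀ x : M, σ x = x


/-- `v` is a qftp-preserving injection from `X` to `Y` (both subsets of a structure `M`):
it is injective on `X`, maps `X` into `Y`, and every finite tuple from `X` has the same
quantifier-free type as its image tuple under `v`. -/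
def QftpPreservingBetween (L : FirstOrder.Language) (M : Type*) [L.Structure M]
    (X Y : Set M) (v : M → M) : Prop :=
  Set.InjOn v X ∧ Set.MapsTo v X Y ∧
    ∀ (m : ℕ) (x : Fin m → M), (∀ i, x i ∈ X) → SameQfType L M x (v ∘ x)

/-! `g(v)` is realised as `Function.extend g (g ∘ v) id`, which sends `g x` to `g (v x)` because
`g` is injective; it is qftp-preserving since `g` respects quantifier-free types. The transpose
`Φ(ψ) = f ∘ ψ ∘ g` is qftp-preserving because a tuple `x̄` has the type of `f(g(x̄))`, which by
qftp-respecting `f` has the type of `f(ψ(g(x̄)))`. Naturality `Φ(ψ ∘ g(v)) = Φ(ψ) ∘ v` holds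
pointwise, and it also gives (ii) for `ā` from (ii) for `b̄` by composition with `v`. -/

theorem SameQfType.trans {L : FirstOrder.Language} {M : Type*} [L.Structure M] {n : ℕ}
    {x y z : Fin n → M} (hxy : SameQfType L M x y) (hyz : SameQfType L M y z) :
    SameQfType L M x z :=
  fun φ hφ => (hxy φ hφ).trans (hyz φ hφ)

namespace QftpPreservingBetween

variable {L : FirstOrder.Language} {M : Type*} [L.Structure M] {X Y Z : Set M} {u v : M → M}

theorem comp (hu : QftpPreservingBetween L M Y Z u) (hv : QftpPreservingBetween L M X Y v) :
    QftpPreservingBetween L M X Z (u ∘ v) :=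
  ⟨hu.1.comp hv.1 hv.2.1, hu.2.1.comp hv.2.1, fun m x hx =>
    (hv.2.2 m x hx).trans (hu.2.2 m (v ∘ x) fun i => hv.2.1 (hx i))⟩

theorem congr (hu : QftpPreservingBetween L M X Y u) (huv : Set.EqOn u v X) :
    QftpPreservingBetween L M X Y v := by
  refine ⟨hu.1.congr huv, hu.2.1.congr huv, fun m x hx => ?_⟩
  have hcomp : v ∘ x = u ∘ x := funext fun i => (huv (hx i)).symm
  rw [hcomp]
  exact hu.2.2 m x hx

end QftpPreservingBetween

theorem QftpRespecting.map_qftpPreservingBetween {L L' : FirstOrder.Language} {M N : Type*}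
    [L.Structure M] [L'.Structure N] {h : M → N} (hh : QftpRespecting L L' M N h)
    {X Y : Set M} {v : M → M} (hv : QftpPreservingBetween L M X Y v) {w : N → N}
    (hw : ∀ x ∈ X, w (h x) = h (v x)) :
    QftpPreservingBetween L' N (h '' X) (h '' Y) w := by
  refine ⟨?_, ?_, fun m y hy => ?_⟩
  · rintro _ ⟨x, hx, rfl⟩ _ ⟨x', hx', rfl⟩ hxx'
    rw [hw x hx, hw x' hx'] at hxx'
    rw [hv.1 hx hx' (hh.1 hxx')]
  · rintro _ ⟨x, hx, rfl⟩
    rw [hw x hx]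
    exact Set.mem_image_of_mem h (hv.2.1 hx)
  · choose x hxX hxy using hy
    obtain rfl : y = h ∘ x := funext fun i => (hxy i).symm
    have himage : w ∘ (h ∘ x) = h ∘ (v ∘ x) := funext fun i => hw (x i) (hxX i)
    rw [himage]
    exact hh.2 m x (v ∘ x) (hv.2.2 m x hxX)

theorem IsSemiRetraction.qftpPreservingBetween_transpose {L L' : FirstOrder.Language}
    {M N : Type*} [L.Structure M] [L'.Structure N] {g : M → N} {f : N → M}
    (hsr : IsSemiRetraction L L' M N g f) {X : Set M} {Y : Set N} {ψ : N → N}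
    (hψ : QftpPreservingBetween L' N (g '' X) Y ψ) :
    QftpPreservingBetween L M X (f '' Y) (fun x => f (ψ (g x))) := by
  obtain ⟨⟨hg, -⟩, ⟨hf, hfq⟩, hfg⟩ := hsr
  refine ⟨?_, fun x hx => Set.mem_image_of_mem f (hψ.2.1 (Set.mem_image_of_mem g hx)),
    fun m x hx => ?_⟩
  · intro x hx x' hx' hxx'
    exact hg (hψ.1 (Set.mem_image_of_mem g hx) (Set.mem_image_of_mem g hx') (hf hxx'))
  · have hgx : SameQfType L' N (g ∘ x) (ψ ∘ g ∘ x) :=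
      hψ.2.2 m (g ∘ x) fun i => Set.mem_image_of_mem g (hx i)
    exact (hfg m x).trans (hfq m _ _ hgx)

/-- Theorem 6.4 / `adj`: a semi-retraction `(g, f)` between `𝒜` and `ℬ`
yields a pre-adjunction between the categories of finite tuples of `𝒜` and of `ℬ` with
qftp-preserving injections as morphisms.  Concretely: for tuples `ā, b̄` from `𝒜` and `c̄` from
`ℬ`, a qftp-preserving injection `v : ran ā → ran b̄` and a qftp-preserving injection
`ψ : ran g(b̄) → ran c̄`, (i) there is a map `w = g(v) : ran g(ā) → ran g(b̄)` which is a
qftp-preserving injection, (ii) the maps `Φ_{b̄,c̄}(ψ) = f ∘ ψ ∘ g : ran b̄ → ran f(c̄)` and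
`Φ_{ā,c̄}(ψ ∘ w) : ran ā → ran f(c̄)` are qftp-preserving injections, and (iii)
`Φ_{ā,c̄}(ψ ∘ g(v)) = Φ_{b̄,c̄}(ψ) ∘ v` on `ran ā`. -/
theorem semiRetraction_gives_preadjunction_on_tuples
    {L L' : FirstOrder.Language} {M N : Type*} [L.Structure M] [L'.Structure N]
    (g : M → N) (f : N → M)
    (hsr : IsSemiRetraction L L' M N g f)
    {p q s : ℕ} (a : Fin p → M) (b : Fin q → M) (c : Fin s → N)
    (v : M → M) (hv : QftpPreservingBetween L M (Set.range a) (Set.range b) v)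
    (ψ : N → N)
    (hψ : QftpPreservingBetween L' N (Set.range (g ∘ b)) (Set.range c) ψ) :
    ∃ w : N → N,
      -- (i) `w = g(v)` is a qftp-preserving injection from `g(ran ā)` to `g(ran b̄)`
      (∀ x ∈ Set.range a, w (g x) = g (v x)) ∧
      QftpPreservingBetween L' N (Set.range (g ∘ a)) (Set.range (g ∘ b)) w ∧
      -- (ii) `Φ_{b̄,c̄}(ψ)` and `Φ_{ā,c̄}(ψ ∘ w)` are qftp-preserving injections
      QftpPreservingBetween L M (Set.range b) (Set.range (f ∘ c)) (fun x => f (ψ (g x))) ∧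
      QftpPreservingBetween L M (Set.range a) (Set.range (f ∘ c)) (fun x => f (ψ (w (g x)))) ∧
      -- (iii) `Φ_{ā,c̄}(ψ ∘ g(v)) = Φ_{b̄,c̄}(ψ) ∘ v`
      ∀ x ∈ Set.range a, f (ψ (w (g x))) = f (ψ (g (v x))) := by
  have hw (x : M) : Function.extend g (g ∘ v) id (g x) = g (v x) :=
    hsr.1.1.extend_apply (g ∘ v) id x
  rw [Set.range_comp] at hψ
  have hΦb := hsr.qftpPreservingBetween_transpose hψ
  rw [Set.range_comp, Set.range_comp, Set.range_comp]
  refine ⟨Function.extend g (g ∘ v) id, fun x _ => hw x,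
    hsr.1.map_qftpPreservingBetween hv fun x _ => hw x, hΦb, ?_, fun x _ => by rw [hw]⟩
  exact (hΦb.comp hv).congr fun x _ => by simp only [Function.comp_apply, hw]
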